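/- Fix α ∈ ℂ with Re α > 0 and Im α > 0. Then there exist constants C > 0 and R > 0 such that |φ(α,r) − α·r − q(α)| ≤ C r^{−2} for all r > R. -/

import Mathlib

/-- `w α r = √(1 + α² sinh² r)` (principal branch). -/
noncomputable def w (α : ℂ) (r : ℝ) : ℂ :=
  (1 + α ^ 2 * (Real.sinh r : ℂ) ^ 2) ^ (1 / 2 : ℂ)

/-- `φ(α,r) = α log((α cosh r + w)/√(α²−1)) + (1/2) log((cosh r − w)/(cosh r + w))`
(principal branches). -/
noncomputable def phi (α : ℂ) (r : ℝ) : ℂ :=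
  α * Complex.log ((α * (Real.cosh r : ℂ) + w α r) / ((α ^ 2 - 1) ^ (1 / 2 : ℂ))) +
    (1 / 2 : ℂ) * Complex.log (((Real.cosh r : ℂ) - w α r) / ((Real.cosh r : ℂ) + w α r))

/-- `q(α) = α log(α/√(α²−1)) + (1/2) log((1−α)/(1+α))` (principal branches). -/
noncomputable def qfun (α : ℂ) : ℂ :=
  α * Complex.log (α / ((α ^ 2 - 1) ^ (1 / 2 : ℂ))) +
    (1 / 2 : ℂ) * Complex.log ((1 - α) / (1 + α))

/-!
Put `s = e^{-2r}`. Multiplying the numerators and denominators in `φ(α,r)` by `e^{-r}` gives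
`φ(α,r) = α r + F(s)`, where `F` is `φ` with `cosh r` and `w(α,r)` replaced by `(1 + s)/2` and
`√(s + α²((1 - s)/2)²)`, and `F(0) = q(α)`. For `Re α > 0`, `Im α > 0` every square root and
logarithm in `F` is evaluated in the slit plane at `s = 0`, so `F` is holomorphic there and
`F(s) - F(0) = O(s) = O(e^{-2r}) = O(r⁻²)`.
-/

open Complex Asymptotics Filter Topology

lemma Complex.ofReal_mul_cpow {c : ℝ} (hc : 0 < c) (b x : ℂ) :
    ((c : ℂ) * b) ^ x = (c : ℂ) ^ x * b ^ x := by
  rcases eq_or_ne b 0 with rfl | hb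
  · rcases eq_or_ne x 0 with rfl | hx
    · simp
    · simp [zero_cpow hx]
  have hc' : (c : ℂ) ≠ 0 := ofReal_ne_zero.mpr hc.ne'
  rw [cpow_def_of_ne_zero (mul_ne_zero hc' hb), cpow_def_of_ne_zero hc', cpow_def_of_ne_zero hb,
    log_ofReal_mul hc hb, ofReal_log hc.le, add_mul, exp_add]

noncomputable def reducedW (α s : ℂ) : ℂ :=
  (s + α ^ 2 * ((1 - s) / 2) ^ 2) ^ (1 / 2 : ℂ)

noncomputable def reducedPhi (α s : ℂ) : ℂ :=
  α * log ((α * ((1 + s) / 2) + reducedW α s) / (α ^ 2 - 1) ^ (1 / 2 : ℂ)) +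
    1 / 2 * log (((1 + s) / 2 - reducedW α s) / ((1 + s) / 2 + reducedW α s))

lemma exp_neg_mul_sinh (r : ℝ) : Real.exp (-r) * Real.sinh r = (1 - Real.exp (-2 * r)) / 2 := by
  have h : Real.exp (-r) * Real.exp r = 1 := by rw [← Real.exp_add]; simp
  rw [Real.sinh_eq, show -2 * r = -r + -r by ring, Real.exp_add]
  linear_combination h / 2

lemma exp_neg_mul_cosh (r : ℝ) : Real.exp (-r) * Real.cosh r = (1 + Real.exp (-2 * r)) / 2 := by
  have h : Real.exp (-r) * Real.exp r = 1 := by rw [← Real.exp_add]; simp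
  rw [Real.cosh_eq, show -2 * r = -r + -r by ring, Real.exp_add]
  linear_combination h / 2

lemma exp_neg_mul_w (α : ℂ) (r : ℝ) :
    (Real.exp (-r) : ℂ) * w α r = reducedW α (Real.exp (-2 * r)) := by
  have hsq : ((Real.exp (-2 * r) : ℝ) : ℂ) = (Real.exp (-r) : ℂ) ^ 2 := by
    rw [← ofReal_pow, ← Real.exp_nat_mul]; push_cast; ring_nf
  have hroot : ((Real.exp (-2 * r) : ℝ) : ℂ) ^ (1 / 2 : ℂ) = Real.exp (-r) := by
    rw [hsq, one_div]
    exact sq_cpow_two_inv (by rw [ofReal_re]; exact Real.exp_pos _)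
  have hsinh := congrArg ((↑) : ℝ → ℂ) (exp_neg_mul_sinh r)
  simp only [ofReal_mul, ofReal_sub, ofReal_div, ofReal_one, ofReal_ofNat] at hsinh
  have hrad : ((Real.exp (-2 * r) : ℝ) : ℂ) + α ^ 2 * ((1 - (Real.exp (-2 * r) : ℝ)) / 2) ^ 2
      = (Real.exp (-2 * r) : ℝ) * (1 + α ^ 2 * (Real.sinh r : ℂ) ^ 2) := by
    rw [← hsinh, hsq]; ring
  rw [reducedW, hrad, ofReal_mul_cpow (Real.exp_pos _), hroot, w]

lemma reducedW_re_nonneg (α s : ℂ) : 0 ≤ (reducedW α s).re := by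
  rw [reducedW, one_div, cpow_inv_two_re]
  exact Real.sqrt_nonneg _

section FirstQuadrant

variable {α : ℂ}

lemma mul_add_reducedW_ne_zero (hre : 0 < α.re) {s : ℝ} (hs : 0 ≤ s) :
    α * ((1 + s) / 2) + reducedW α s ≠ 0 := by
  refine ne_of_apply_ne re ?_
  have h : (α * ((1 + s) / 2)).re = α.re * ((1 + s) / 2) := by
    rw [← ofReal_one, ← ofReal_add, ← ofReal_ofNat, ← ofReal_div, re_mul_ofReal]
  rw [add_re, h, zero_re]
  nlinarith [reducedW_re_nonneg α s]

lemma phi_eq_reducedPhi (hre : 0 < α.re) (hα : α ^ 2 ≠ 1) (r : ℝ) :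
    phi α r = α * r + reducedPhi α (Real.exp (-2 * r)) := by
  set s : ℝ := Real.exp (-2 * r)
  set e : ℂ := (Real.exp (-r) : ℂ)
  have he : e ≠ 0 := ofReal_ne_zero.mpr (Real.exp_pos _).ne'
  have hee : (Real.exp r : ℂ) * e = 1 := by
    rw [← ofReal_mul, ← Real.exp_add, add_neg_cancel, Real.exp_zero, ofReal_one]
  have hcosh := congrArg ((↑) : ℝ → ℂ) (exp_neg_mul_cosh r)
  simp only [ofReal_mul, ofReal_add, ofReal_div, ofReal_one, ofReal_ofNat] at hcosh
  have hw := exp_neg_mul_w α r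
  have hnum := mul_add_reducedW_ne_zero hre (Real.exp_pos (-2 * r)).le
  have hS : (α ^ 2 - 1) ^ (1 / 2 : ℂ) ≠ 0 := by
    rw [Ne, cpow_eq_zero_iff]
    exact fun h => hα (sub_eq_zero.mp h.1)
  have hlog : log ((α * Real.cosh r + w α r) / (α ^ 2 - 1) ^ (1 / 2 : ℂ))
      = r + log ((α * ((1 + s) / 2) + reducedW α s) / (α ^ 2 - 1) ^ (1 / 2 : ℂ)) := by
    have h : (α * Real.cosh r + w α r) / (α ^ 2 - 1) ^ (1 / 2 : ℂ)
        = Real.exp r * ((α * ((1 + s) / 2) + reducedW α s) / (α ^ 2 - 1) ^ (1 / 2 : ℂ)) := by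
      rw [← hcosh, ← hw]
      linear_combination -(α * Real.cosh r + w α r) / (α ^ 2 - 1) ^ (1 / 2 : ℂ) * hee
    rw [h, log_ofReal_mul (Real.exp_pos r) (div_ne_zero hnum hS), Real.log_exp]
  have hratio : ((Real.cosh r : ℂ) - w α r) / (Real.cosh r + w α r)
      = ((1 + s) / 2 - reducedW α s) / ((1 + s) / 2 + reducedW α s) := by
    rw [← hcosh, ← hw, ← mul_sub, ← mul_add, mul_div_mul_left _ _ he]
  rw [phi, hlog, hratio, reducedPhi]
  ring

lemma reducedW_zero (hre : 0 < α.re) : reducedW α 0 = α / 2 := by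
  rw [reducedW, one_div, show (0 : ℂ) + α ^ 2 * ((1 - 0) / 2) ^ 2 = (α / 2) ^ 2 by ring]
  exact sq_cpow_two_inv (by simpa using hre)

lemma reducedPhi_zero (hre : 0 < α.re) : reducedPhi α 0 = qfun α := by
  have h1 : α * ((1 + 0) / 2) + α / 2 = α := by ring
  have h2 : ((1 + 0) / 2 - α / 2) / ((1 + 0) / 2 + α / 2) = (1 - α) / (1 + α) := by
    rw [show (1 + 0 : ℂ) / 2 - α / 2 = (1 - α) / 2 by ring,
      show (1 + 0 : ℂ) / 2 + α / 2 = (1 + α) / 2 by ring, div_div_div_cancel_right₀ two_ne_zero]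
  rw [reducedPhi, reducedW_zero hre, h1, h2, qfun]

lemma im_sq_pos (hre : 0 < α.re) (him : 0 < α.im) : 0 < (α ^ 2).im := by
  rw [sq, mul_im]; nlinarith

lemma div_sqrt_sq_sub_one_mem_slitPlane (hre : 0 < α.re) (him : 0 < α.im) :
    α / (α ^ 2 - 1) ^ (1 / 2 : ℂ) ∈ slitPlane := by
  have hne : α ^ 2 - 1 ≠ 0 := fun h => (im_sq_pos hre him).ne' (by simpa using congrArg im h)
  have hsq : (α / (α ^ 2 - 1) ^ (1 / 2 : ℂ)) ^ 2 = 1 + (α ^ 2 - 1)⁻¹ := by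
    rw [div_pow, one_div, cpow_ofNat_inv_pow]
    field_simp
    ring
  have him_sq : (1 + (α ^ 2 - 1)⁻¹).im < 0 := by
    have := im_sq_pos hre him
    rw [add_im, inv_im, one_im, zero_add, sub_im, one_im, sub_zero]
    exact div_neg_of_neg_of_pos (neg_neg_of_pos this) (normSq_pos.mpr hne)
  rw [mem_slitPlane_iff]
  refine Or.inr fun h => him_sq.ne ?_
  rw [← hsq, sq, mul_im, h]
  ring

lemma one_sub_div_one_add_mem_slitPlane (him : 0 < α.im) :
    (1 - α) / (1 + α) ∈ slitPlane := by
  have hne : 1 + α ≠ 0 := fun h => him.ne' (by simpa using congrArg im h)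
  have h : (1 - α) / (1 + α) = 2 * (1 + α)⁻¹ - 1 := by field_simp; ring
  rw [mem_slitPlane_iff, h]
  refine Or.inr (ne_of_lt ?_)
  rw [sub_im, mul_im, inv_im, inv_re, add_im, one_im, zero_add]
  norm_num
  rw [neg_div]
  linarith [div_pos him (normSq_pos.mpr hne)]

lemma differentiableAt_reducedPhi_zero (hre : 0 < α.re) (him : 0 < α.im) :
    DifferentiableAt ℂ (reducedPhi α) 0 := by
  have hW : DifferentiableAt ℂ (reducedW α) 0 := by
    refine DifferentiableAt.cpow_const (by fun_prop) ?_
    rw [mem_slitPlane_iff]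
    have := im_sq_pos hre him
    right
    norm_num
    positivity
  have hden : (1 + 0) / 2 + reducedW α 0 ≠ 0 := by
    rw [reducedW_zero hre]
    refine ne_of_apply_ne re ?_
    norm_num
    positivity
  have hz : (α * ((1 + 0) / 2) + reducedW α 0) / (α ^ 2 - 1) ^ (1 / 2 : ℂ) ∈ slitPlane := by
    rw [reducedW_zero hre, show α * ((1 + 0) / 2) + α / 2 = α by ring]
    exact div_sqrt_sq_sub_one_mem_slitPlane hre him
  have hB : ((1 + 0) / 2 - reducedW α 0) / ((1 + 0) / 2 + reducedW α 0) ∈ slitPlane := by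
    rw [reducedW_zero hre, show (1 + 0 : ℂ) / 2 - α / 2 = (1 - α) / 2 by ring,
      show (1 + 0 : ℂ) / 2 + α / 2 = (1 + α) / 2 by ring, div_div_div_cancel_right₀ two_ne_zero]
    exact one_sub_div_one_add_mem_slitPlane him
  unfold reducedPhi
  fun_prop (disch := assumption)

end FirstQuadrant

lemma isBigO_exp_neg_two_mul_one_div_sq :
    (fun r : ℝ => Real.exp (-2 * r)) =O[atTop] fun r => 1 / r ^ 2 := by
  refine IsBigO.of_bound 1 ?_
  filter_upwards [eventually_gt_atTop 0] with r hr
  have hexp : r ^ 2 ≤ Real.exp (2 * r) := by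
    rw [two_mul, Real.exp_add]
    nlinarith [Real.add_one_le_exp r]
  rw [Real.norm_of_nonneg (Real.exp_pos _).le, Real.norm_of_nonneg (by positivity), one_mul,
    neg_mul, Real.exp_neg, ← one_div]
  exact one_div_le_one_div_of_le (by positivity) hexp

lemma exists_pos_bound_of_isBigO_one_div_sq {E : Type*} [SeminormedAddCommGroup E] {f : ℝ → E}
    (h : f =O[atTop] fun r => 1 / r ^ 2) :
    ∃ C > (0 : ℝ), ∃ R > (0 : ℝ), ∀ r : ℝ, R < r → ‖f r‖ ≤ C / r ^ 2 := by
  obtain ⟨C, hC, hCf⟩ := h.exists_pos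
  obtain ⟨R, hR⟩ := eventually_atTop.mp hCf.bound
  refine ⟨C, hC, max R 1, by positivity, fun r hr => ?_⟩
  simpa [div_eq_mul_inv] using hR r (le_of_max_le_left hr.le)

/-- As `r → ∞`, `φ(α,r) = α r + q(α) + O(r⁻²)`. -/
theorem phi_asymptotic_infty (α : ℂ) (hre : 0 < α.re) (him : 0 < α.im) :
    ∃ C > (0 : ℝ), ∃ R > (0 : ℝ), ∀ r : ℝ, R < r →
      ‖phi α r - α * (r : ℂ) - qfun α‖ ≤ C / r ^ 2 := by
  have hα : α ^ 2 ≠ 1 := fun h => (im_sq_pos hre him).ne' (by simp [h])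
  have hs : (fun r : ℝ => ((Real.exp (-2 * r) : ℝ) : ℂ)) =O[atTop] fun r => 1 / r ^ 2 :=
    isBigO_ofReal_left.mpr isBigO_exp_neg_two_mul_one_div_sq
  have hs_lim : Tendsto (fun r : ℝ => ((Real.exp (-2 * r) : ℝ) : ℂ)) atTop (𝓝 0) :=
    hs.trans_tendsto (tendsto_const_nhds.div_atTop (tendsto_pow_atTop two_ne_zero))
  have hphi := (differentiableAt_reducedPhi_zero hre him).isBigO_sub.comp_tendsto hs_lim
  apply exists_pos_bound_of_isBigO_one_div_sq
  refine (hphi.trans ?_).congr_left fun r => ?_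
  · simpa only [Function.comp_def, sub_zero] using hs
  · simp only [Function.comp_apply, phi_eq_reducedPhi hre hα, reducedPhi_zero hre]
    ring
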